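/- arXiv:0802.0031 — 2 statements merged into one kernel-verified Lean document; each statement's English description precedes it below -/
import Mathlib

section
/- Let k ≥ 2 and let A ∈ M_{2^k}(ℂ) be a diagonal matrix, and set B = W_{k−1} A W_{k−1}^*. Then for every h ≥ 1, the diagonal entries of B satisfy: B_{ii} = A_{ii} whenever i = 4h or i = 4h − 3, and B_{ii} = (1/2)(A_{4h−1,4h−1} + A_{4h−2,4h−2}) whenever i = 4h − 1 or i = 4h − 2 (indices ranging over 1,…,2^k). -/
open Matrix
open scoped Kronecker

noncomputable section

/-- Cast a square matrix along an equality of sizes. -/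
def mcast {m n : ℕ} (h : m = n) (A : Matrix (Fin m) (Fin m) ℂ) :
    Matrix (Fin n) (Fin n) ℂ :=
  Matrix.reindex (finCongr h) (finCongr h) A

/-- `A ⊗ I₂` in the paper's convention, i.e. the block-diagonal matrix `diag(A, A)`
(used for the recursion `W_{n+1} = Wₙ ⊗ I₂ = diag(Wₙ, Wₙ)`). -/
def blockDup {m : ℕ} (A : Matrix (Fin m) (Fin m) ℂ) :
    Matrix (Fin (2 * m)) (Fin (2 * m)) ℂ :=
  Matrix.reindex finProdFinEquiv finProdFinEquiv
    ((1 : Matrix (Fin 2) (Fin 2) ℂ) ⊗ₖ A)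

/-- `I₂ ⊗ A` in the paper's convention: each entry `a_{ij}` is placed at the (1-based)
positions `(2i−1, 2j−1)` and `(2i, 2j)`.  This is the coherent embedding
`φ(A) = I₂ ⊗ A` of the paper, for which `e_{ij} ↦ e_{2i−1,2j−1} + e_{2i,2j}`. -/
def entryDup {m : ℕ} (A : Matrix (Fin m) (Fin m) ℂ) :
    Matrix (Fin (m * 2)) (Fin (m * 2)) ℂ :=
  Matrix.reindex finProdFinEquiv finProdFinEquiv
    (A ⊗ₖ (1 : Matrix (Fin 2) (Fin 2) ℂ))

/-- The 4 × 4 matrix `W₁`. -/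
def W1 : Matrix (Fin 4) (Fin 4) ℂ :=
  !![1, 0, 0, 0;
     0, (Real.sqrt 2 : ℂ)⁻¹, -(Real.sqrt 2 : ℂ)⁻¹, 0;
     0, (Real.sqrt 2 : ℂ)⁻¹, (Real.sqrt 2 : ℂ)⁻¹, 0;
     0, 0, 0, 1]

/-- The sequence `Wₙ ∈ M_{2^{n+1}}(ℂ)`, with `W_{n+1} = Wₙ ⊗ I₂ = diag(Wₙ, Wₙ)`.
(The value at `0` is irrelevant; all statements only involve `n ≥ 1`.) -/
def Wmat : (n : ℕ) → Matrix (Fin (2 ^ (n + 1))) (Fin (2 ^ (n + 1))) ℂ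
  | 0 => 1
  | 1 => mcast (by norm_num) W1
  | (n + 2) => mcast (by ring) (blockDup (Wmat (n + 1)))

/-- `iterA k A n` is the matrix `A(n+1) ∈ M_{2^{k+n}}(ℂ)` of the paper:
`A(1) = A`, `A(n+1) = W_{k+n-1} (I₂ ⊗ A(n)) W_{k+n-1}^*`. -/
def iterA (k : ℕ) (A : Matrix (Fin (2 ^ k)) (Fin (2 ^ k)) ℂ) :
    (n : ℕ) → Matrix (Fin (2 ^ (k + n))) (Fin (2 ^ (k + n))) ℂ
  | 0 => A
  | (n + 1) => Wmat (k + n) * mcast (by ring) (entryDup (iterA k A n)) * (Wmat (k + n))ᴴ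

/-- Squared Frobenius (Hilbert–Schmidt) norm. -/
def frobSq {m n : ℕ} (A : Matrix (Fin m) (Fin n) ℂ) : ℝ :=
  ∑ i, ∑ j, ‖A i j‖ ^ 2

/-- `diffA k A n = A(n+2) - I₂ ⊗ A(n+1)` in the paper's numbering. -/
def diffA (k : ℕ) (A : Matrix (Fin (2 ^ k)) (Fin (2 ^ k)) ℂ) (n : ℕ) :
    Matrix (Fin (2 ^ (k + n + 1))) (Fin (2 ^ (k + n + 1))) ℂ :=
  iterA k A (n + 1) - mcast (by ring) (entryDup (iterA k A n))

/-- The diagonal compression `E_{D(m)}`. -/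
def diagComp {m : ℕ} (A : Matrix (Fin m) (Fin m) ℂ) : Matrix (Fin m) (Fin m) ℂ :=
  Matrix.diagonal (fun i => A i i)

/-!
`W_{k-1}` is block diagonal with `2^{k-2}` copies of `W₁` on the diagonal, so conjugating a
diagonal matrix by it only mixes diagonal entries inside each block of four consecutive indices,
with weights `|(W₁)ᵣₛ|²`. These weights are `1` at the two corners and `1/2` on the middle
`2 × 2` block, which gives the four formulas.
-/

open Complex

lemma mcast_apply {m n : ℕ} (h : m = n) (A : Matrix (Fin m) (Fin m) ℂ) (i j : Fin n) :
    mcast h A i j = A ⟨i, h ▸ i.2⟩ ⟨j, h ▸ j.2⟩ := by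
  subst h; rfl

/-- `W = diag(C, …, C)`: the index `i` lies in the diagonal block `i / b`, at position `i % b`
inside it. -/
def IsRepeatedBlockDiagonal {N b : ℕ} [NeZero b] (C : Matrix (Fin b) (Fin b) ℂ)
    (W : Matrix (Fin N) (Fin N) ℂ) : Prop :=
  ∀ i j : Fin N, W i j = if (i : ℕ) / b = j / b then C (Fin.ofNat b i) (Fin.ofNat b j) else 0

def blockIndex {N b : ℕ} (q : ℕ) (hq : b * q + b ≤ N) (r : Fin b) : Fin N :=
  ⟨b * q + r, by omega⟩

lemma blockIndex_injective {N b q : ℕ} (hq : b * q + b ≤ N) :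
    Function.Injective (blockIndex q hq) :=
  fun r s h => Fin.ext (by simpa [blockIndex] using congrArg Fin.val h)

namespace IsRepeatedBlockDiagonal

variable {N b : ℕ} [NeZero b] {C : Matrix (Fin b) (Fin b) ℂ}

lemma refl : IsRepeatedBlockDiagonal C C := by
  intro i j
  simp [Nat.div_eq_of_lt i.2, Nat.div_eq_of_lt j.2]

lemma of_blockDup {m : ℕ} [NeZero m] (A : Matrix (Fin m) (Fin m) ℂ) :
    IsRepeatedBlockDiagonal A (blockDup A) := by
  intro i j
  simp only [blockDup, reindex_apply, submatrix_apply, finProdFinEquiv_symm_apply,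
    kroneckerMap_apply, one_apply, Fin.ext_iff, Fin.coe_divNat]
  split_ifs
  · rw [one_mul]; rfl
  · rw [zero_mul]

lemma mcast {M N : ℕ} {W : Matrix (Fin M) (Fin M) ℂ} (hW : IsRepeatedBlockDiagonal C W)
    (h : M = N) : IsRepeatedBlockDiagonal C (mcast h W) := by
  intro i j
  rw [mcast_apply, hW]

lemma trans {m : ℕ} [NeZero m] {W : Matrix (Fin m) (Fin m) ℂ} {V : Matrix (Fin N) (Fin N) ℂ}
    (hbm : b ∣ m) (hW : IsRepeatedBlockDiagonal C W) (hV : IsRepeatedBlockDiagonal W V) :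
    IsRepeatedBlockDiagonal C V := by
  obtain ⟨c, rfl⟩ := hbm
  intro i j
  have hblock : ∀ x : ℕ, x / (b * c) = x / b / c ∧ x % (b * c) / b = x / b % c :=
    fun x => ⟨(Nat.div_div_eq_div_mul x b c).symm, Nat.mod_mul_right_div_self x b c⟩
  have hofNat_mod : ∀ x : ℕ, Fin.ofNat b (x % (b * c)) = Fin.ofNat b x :=
    fun x => Fin.ext (by simp)
  rw [hV, hW]
  simp only [Fin.val_ofNat, (hblock _).1, (hblock _).2, hofNat_mod,
    Nat.ext_div_mod_iff c ((i : ℕ) / b), ite_and]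

lemma mul_mul_conjTranspose_apply_blockIndex {W D : Matrix (Fin N) (Fin N) ℂ}
    (hW : IsRepeatedBlockDiagonal C W) (hD : D.IsDiag) (q : ℕ) (hq : b * q + b ≤ N)
    (r : Fin b) :
    (W * D * Wᴴ) (blockIndex q hq r) (blockIndex q hq r) =
      ∑ s, (normSq (C r s) : ℂ) * D (blockIndex q hq s) (blockIndex q hq s) := by
  have hdiv (s : Fin b) : (b * q + s) / b = q := by
    rw [Nat.mul_add_div (NeZero.pos b), Nat.div_eq_of_lt s.2, add_zero]
  have hmod (s : Fin b) : Fin.ofNat b (b * q + s) = s :=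
    Fin.ext (by simp [Nat.mod_eq_of_lt s.2])
  rw [← hD.diagonal_diag, mul_apply]
  symm
  refine Fintype.sum_of_injective _ (blockIndex_injective hq) _ _ (fun x hx => ?_) (fun s => ?_)
  · rw [mul_diagonal, conjTranspose_apply, hW, blockIndex, hdiv, if_neg, zero_mul, zero_mul]
    intro hx'
    exact hx ⟨Fin.ofNat b x, Fin.ext (by simp [blockIndex, hx', Nat.div_add_mod])⟩
  · rw [mul_diagonal, conjTranspose_apply, hW]
    simp only [blockIndex, hdiv, hmod, if_true, diagonal_apply_eq, star_def]
    rw [mul_right_comm, mul_conj]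

end IsRepeatedBlockDiagonal

lemma isRepeatedBlockDiagonal_Wmat : ∀ n, 1 ≤ n → IsRepeatedBlockDiagonal W1 (Wmat n)
  | 1, _ => IsRepeatedBlockDiagonal.refl.mcast _
  | n + 2, _ =>
    have : NeZero (2 ^ (n + 2)) := ⟨by positivity⟩
    ((isRepeatedBlockDiagonal_Wmat (n + 1) (by omega)).trans
      (pow_dvd_pow 2 (by omega : 2 ≤ n + 2)) (.of_blockDup _)).mcast _

lemma normSq_W1 (r s : Fin 4) :
    normSq (W1 r s) = !![1, 0, 0, 0; 0, 1 / 2, 1 / 2, 0; 0, 1 / 2, 1 / 2, 0; 0, 0, 0, 1] r s := by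
  have h : normSq (Real.sqrt 2 : ℂ)⁻¹ = 1 / 2 := by
    rw [map_inv₀, normSq_ofReal, Real.mul_self_sqrt zero_le_two, one_div]
  fin_cases r <;> fin_cases s <;> simp [W1, h]

/-- Let `k ≥ 2`, let `A ∈ M_{2^k}(ℂ)` be diagonal, and set `B = W_{k−1} A W_{k−1}^*`.
For every `h ≥ 1` (with the 1-based indices `4h−3, …, 4h` in range `1, …, 2^k`,
equivalently `4h ≤ 2^k`): `B_{ii} = A_{ii}` for `i = 4h` and `i = 4h−3`, and
`B_{ii} = (A_{4h−1,4h−1} + A_{4h−2,4h−2})/2` for `i = 4h−1` and `i = 4h−2`.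
(0-based, the 1-based index `i` corresponds to `i − 1`.) -/
theorem stmt_8 (k : ℕ) (hk : 2 ≤ k) (A : Matrix (Fin (2 ^ k)) (Fin (2 ^ k)) ℂ)
    (hA : A.IsDiag)
    (B : Matrix (Fin (2 ^ k)) (Fin (2 ^ k)) ℂ)
    (hB : B =
      mcast (show 2 ^ (k - 1 + 1) = 2 ^ k by
          have e : k - 1 + 1 = k := by omega
          rw [e]) (Wmat (k - 1)) * A *
        (mcast (show 2 ^ (k - 1 + 1) = 2 ^ k by
          have e : k - 1 + 1 = k := by omega
          rw [e]) (Wmat (k - 1)))ᴴ)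
    (h : ℕ) (hh : 1 ≤ h) (hrange : 4 * h ≤ 2 ^ k) :
    B ⟨4 * h - 1, by omega⟩ ⟨4 * h - 1, by omega⟩ = A ⟨4 * h - 1, by omega⟩ ⟨4 * h - 1, by omega⟩ ∧
    B ⟨4 * h - 4, by omega⟩ ⟨4 * h - 4, by omega⟩ = A ⟨4 * h - 4, by omega⟩ ⟨4 * h - 4, by omega⟩ ∧
    B ⟨4 * h - 2, by omega⟩ ⟨4 * h - 2, by omega⟩ =
      (1 / 2 : ℂ) * (A ⟨4 * h - 2, by omega⟩ ⟨4 * h - 2, by omega⟩ +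
        A ⟨4 * h - 3, by omega⟩ ⟨4 * h - 3, by omega⟩) ∧
    B ⟨4 * h - 3, by omega⟩ ⟨4 * h - 3, by omega⟩ =
      (1 / 2 : ℂ) * (A ⟨4 * h - 2, by omega⟩ ⟨4 * h - 2, by omega⟩ +
        A ⟨4 * h - 3, by omega⟩ ⟨4 * h - 3, by omega⟩) := by
  have hq : 4 * (h - 1) + 4 ≤ 2 ^ k := by omega
  have hW := (isRepeatedBlockDiagonal_Wmat (k - 1) (by omega)).mcast
    (show 2 ^ (k - 1 + 1) = 2 ^ k by rw [Nat.sub_add_cancel (by omega)])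
  have hentry := hW.mul_mul_conjTranspose_apply_blockIndex hA _ hq
  have hindex (r : Fin 4) (n : ℕ) (hn : n < 2 ^ k) (e : n = 4 * (h - 1) + r) :
      (⟨n, hn⟩ : Fin (2 ^ k)) = blockIndex (h - 1) hq r :=
    Fin.ext e
  rw [hindex 3 (4 * h - 1) _ (by simp; omega), hindex 0 (4 * h - 4) _ (by simp; omega),
    hindex 2 (4 * h - 2) _ (by simp; omega), hindex 1 (4 * h - 3) _ (by simp; omega)]
  simp only [hB, hentry, Fin.sum_univ_four, normSq_W1, of_apply, cons_val', cons_val_fin_one,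
    cons_val, cons_val_zero, cons_val_one, Fin.isValue, one_div, ofReal_zero, ofReal_one,
    ofReal_inv, ofReal_ofNat, zero_mul, one_mul, add_zero, zero_add, and_self, true_and]
  ring
end
end

section
/- For every k ≥ 1, all A, B ∈ M_{2^k}(ℂ) and every n ≥ 1, ‖B(n) − A(n)‖_2^2 = 2^{n−1} ‖B − A‖_2^2. -/
open Matrix
open scoped Kronecker

noncomputable section

/-! `A ↦ A(n)` is linear, so `B(n) − A(n) = (B − A)(n)`, and each step of the recursion
doubles the squared Frobenius norm: `I₂ ⊗ ·` doubles it, since every entry appears twice,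
and conjugation by the unitary `W_{k+n-1}` preserves it. -/

section Frobenius

variable {ι κ : Type*} [Fintype ι] [Fintype κ]

lemma frobSq_reindex {m n : ℕ} (e₁ : ι ≃ Fin m) (e₂ : κ ≃ Fin n) (M : Matrix ι κ ℂ) :
    frobSq (reindex e₁ e₂ M) = ∑ i, ∑ j, ‖M i j‖ ^ 2 := by
  unfold frobSq
  rw [← e₁.symm.sum_comp]
  refine Finset.sum_congr rfl fun i _ => ?_
  rw [← e₂.symm.sum_comp]
  simp

lemma frobSq_mcast {m n : ℕ} (h : m = n) (A : Matrix (Fin m) (Fin m) ℂ) :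
    frobSq (mcast h A) = frobSq A :=
  frobSq_reindex _ _ A

lemma sum_norm_sq_kronecker {ι' κ' : Type*} [Fintype ι'] [Fintype κ']
    (A : Matrix ι κ ℂ) (B : Matrix ι' κ' ℂ) :
    ∑ p, ∑ q, ‖(A ⊗ₖ B) p q‖ ^ 2
      = (∑ i, ∑ j, ‖A i j‖ ^ 2) * ∑ a, ∑ b, ‖B a b‖ ^ 2 := by
  simp only [Fintype.sum_prod_type, kronecker_apply, norm_mul, mul_pow, Finset.sum_mul_sum]

lemma frobSq_entryDup {m : ℕ} (A : Matrix (Fin m) (Fin m) ℂ) :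
    frobSq (entryDup A) = 2 * frobSq A := by
  have hI : ∑ a : Fin 2, ∑ b : Fin 2, ‖(1 : Matrix (Fin 2) (Fin 2) ℂ) a b‖ ^ 2 = 2 := by
    norm_num [Fin.sum_univ_two, one_apply]
  rw [entryDup, frobSq_reindex, sum_norm_sq_kronecker, hI, mul_comm]
  rfl

lemma frobSq_eq_re_trace {m : ℕ} (A : Matrix (Fin m) (Fin m) ℂ) :
    frobSq A = (Aᴴ * A).trace.re := by
  simp only [frobSq, trace, diag_apply, mul_apply, conjTranspose_apply, Complex.re_sum]
  rw [Finset.sum_comm]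
  refine Finset.sum_congr rfl fun i _ => Finset.sum_congr rfl fun j _ => ?_
  rw [Complex.sq_norm, Complex.normSq_apply]
  simp [Complex.mul_re]

lemma frobSq_unitary_conj {m : ℕ} {W : Matrix (Fin m) (Fin m) ℂ} (hW : Wᴴ * W = 1)
    (M : Matrix (Fin m) (Fin m) ℂ) :
    frobSq (W * M * Wᴴ) = frobSq M := by
  have hconj : (W * M * Wᴴ)ᴴ * (W * M * Wᴴ) = W * (Mᴴ * M) * Wᴴ := by
    simp only [conjTranspose_mul, conjTranspose_conjTranspose, Matrix.mul_assoc]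
    rw [← Matrix.mul_assoc Wᴴ W, hW, Matrix.one_mul]
  rw [frobSq_eq_re_trace, frobSq_eq_re_trace, hconj, trace_mul_cycle, ← Matrix.mul_assoc, hW,
    Matrix.one_mul]

end Frobenius

section Unitary

variable {R : Type*} [CommRing R] [StarRing R] {ι κ : Type*} [Fintype ι] [Fintype κ]
  [DecidableEq ι] [DecidableEq κ]

lemma reindex_conjTranspose_mul_self_eq_one {A : Matrix ι ι R} (hA : Aᴴ * A = 1) (e : ι ≃ κ) :
    (reindex e e A)ᴴ * reindex e e A = 1 := by
  rw [conjTranspose_reindex, reindex_apply, reindex_apply, submatrix_mul_equiv, hA,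
    submatrix_one_equiv]

lemma one_kronecker_conjTranspose_mul_self_eq_one {A : Matrix κ κ R} (hA : Aᴴ * A = 1) :
    ((1 : Matrix ι ι R) ⊗ₖ A)ᴴ * ((1 : Matrix ι ι R) ⊗ₖ A) = 1 := by
  rw [conjTranspose_kronecker, conjTranspose_one, ← mul_kronecker_mul, Matrix.one_mul, hA,
    one_kronecker_one]

end Unitary

lemma W1_conjTranspose_mul_self : W1ᴴ * W1 = 1 := by
  have hs : (Real.sqrt 2 : ℂ)⁻¹ * (Real.sqrt 2 : ℂ)⁻¹ = 2⁻¹ := by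
    rw [← mul_inv, ← Complex.ofReal_mul, Real.mul_self_sqrt zero_le_two, Complex.ofReal_ofNat]
  ext i j
  fin_cases i <;> fin_cases j <;>
    simp [W1, mul_apply, Fin.sum_univ_four, one_apply, Complex.conj_ofReal, hs] <;> norm_num

lemma Wmat_conjTranspose_mul_self : ∀ n, (Wmat n)ᴴ * Wmat n = 1
  | 0 => by simp [Wmat]
  | 1 => reindex_conjTranspose_mul_self_eq_one W1_conjTranspose_mul_self _
  | n + 2 => reindex_conjTranspose_mul_self_eq_one
      (reindex_conjTranspose_mul_self_eq_one
        (one_kronecker_conjTranspose_mul_self_eq_one (Wmat_conjTranspose_mul_self (n + 1))) _) _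

lemma mcast_sub {m n : ℕ} (h : m = n) (A B : Matrix (Fin m) (Fin m) ℂ) :
    mcast h (A - B) = mcast h A - mcast h B :=
  rfl

lemma entryDup_sub {m : ℕ} (A B : Matrix (Fin m) (Fin m) ℂ) :
    entryDup (A - B) = entryDup A - entryDup B := by
  ext i j
  simp [entryDup, sub_mul]

lemma iterA_sub (k : ℕ) (A B : Matrix (Fin (2 ^ k)) (Fin (2 ^ k)) ℂ) (n : ℕ) :
    iterA k B n - iterA k A n = iterA k (B - A) n := by
  induction n with
  | zero => rfl
  | succ n ih =>
    rw [iterA, iterA, iterA, ← ih, entryDup_sub, mcast_sub, Matrix.mul_sub, Matrix.sub_mul]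

lemma frobSq_iterA (k : ℕ) (C : Matrix (Fin (2 ^ k)) (Fin (2 ^ k)) ℂ) (n : ℕ) :
    frobSq (iterA k C n) = 2 ^ n * frobSq C := by
  induction n with
  | zero => simp [iterA]
  | succ n ih =>
    rw [iterA, frobSq_unitary_conj (Wmat_conjTranspose_mul_self _), frobSq_mcast,
      frobSq_entryDup, ih]
    ring

theorem stmt_11_general (k : ℕ) (A B : Matrix (Fin (2 ^ k)) (Fin (2 ^ k)) ℂ)
    (n : ℕ) :
    frobSq (iterA k B (n - 1) - iterA k A (n - 1)) = 2 ^ (n - 1) * frobSq (B - A) := by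
  rw [iterA_sub, frobSq_iterA]

/-- `‖B(n) − A(n)‖₂² = 2^{n−1} ‖B − A‖₂²` for all `k ≥ 1`, `A, B ∈ M_{2^k}(ℂ)` and `n ≥ 1`.
Here `A(n) = iterA k A (n-1)`. -/
theorem stmt_11 (k : ℕ) (hk : 1 ≤ k) (A B : Matrix (Fin (2 ^ k)) (Fin (2 ^ k)) ℂ)
    (n : ℕ) (hn : 1 ≤ n) :
    frobSq (iterA k B (n - 1) - iterA k A (n - 1)) = 2 ^ (n - 1) * frobSq (B - A) :=
  stmt_11_general k A B n
end
end
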